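/- arXiv:2107.13069 — 8 statements merged into one kernel-verified Lean document; each statement's English description precedes it below -/
import Mathlib

section
/- Let λ, μ ∈ ℤ^k be root-conjugate, i.e. λ − μ = e_a − e_b for some a ≠ b and μ is obtained from λ by swapping coordinates a and b. Then λ and μ are not W-sortable: there is no permutation w of [k] such that both λ_{w(1)} ≥ λ_{w(2)} ≥ ⋯ ≥ λ_{w(k)} and μ_{w(1)} ≥ μ_{w(2)} ≥ ⋯ ≥ μ_{w(k)} hold. -/
/-- The standard basis vector `e_a` of `ℤ^k`. -/
def stdBasis (k : ℕ) (a : Fin k) : Fin k → ℤ := fun i => if i = a then 1 else 0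

/-- A pair of vectors is `W`-sortable if some permutation of the coordinates
makes both weakly decreasing. -/
def WSortable {k : ℕ} (l m : Fin k → ℤ) : Prop :=
  ∃ w : Equiv.Perm (Fin k),
    (∀ i j : Fin k, i ≤ j → l (w j) ≤ l (w i)) ∧ (∀ i j : Fin k, i ≤ j → m (w j) ≤ m (w i))

/-- Two vectors are root-conjugate if they differ by a root `e_a - e_b` (`a ≠ b`)
and are interchanged by the coordinate transposition `(a b)`. -/
def RootConjugate {k : ℕ} (l m : Fin k → ℤ) : Prop :=
  ∃ a b : Fin k, a ≠ b ∧ (∀ i, l i - m i = stdBasis k a i - stdBasis k b i) ∧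
    (∀ i, m i = l (Equiv.swap a b i))

/-! Sorting both vectors by one permutation forces them to be similarly ordered, whereas a
root-conjugate pair strictly reverses the order of the coordinates `a` and `b`. -/

theorem WSortable.monovary {k : ℕ} {l m : Fin k → ℤ} (h : WSortable l m) : Monovary l m := by
  obtain ⟨w, hl, hm⟩ := h
  have hsorted : Monovary (l ∘ w) (m ∘ w) :=
    Antitone.monovary (fun i j hij => hl i j hij) (fun i j hij => hm i j hij)
  simpa [Function.comp_assoc] using hsorted.comp_right w.symm

theorem RootConjugate.exists_swap_succ {k : ℕ} {l m : Fin k → ℤ} (h : RootConjugate l m) :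
    ∃ a b : Fin k, l a = l b + 1 ∧ m a = l b ∧ m b = l a := by
  obtain ⟨a, b, hab, hdiff, hswap⟩ := h
  have hma : m a = l b := by rw [hswap a, Equiv.swap_apply_left]
  have hmb : m b = l a := by rw [hswap b, Equiv.swap_apply_right]
  have hda : l a - m a = 1 := by simpa [stdBasis, hab] using hdiff a
  exact ⟨a, b, by omega, hma, hmb⟩

theorem RootConjugate.not_monovary {k : ℕ} {l m : Fin k → ℤ} (h : RootConjugate l m) :
    ¬ Monovary l m := by
  intro hmono
  obtain ⟨a, b, hsucc, hma, hmb⟩ := h.exists_swap_succ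
  have : l a ≤ l b := hmono (by omega : m a < m b)
  omega

/-- A root-conjugate pair of vectors is never `W`-sortable. -/
theorem stmt0 {k : ℕ} (l m : Fin k → ℤ) (h : RootConjugate l m) : ¬ WSortable l m :=
  fun hsort => h.not_monovary hsort.monovary
end

section
/- Let λ, μ, σ ∈ ℤ^k be three distinct vectors that are pairwise compatible (each pair is either W-sortable or root-conjugate). If λ and μ are root-conjugate and μ and σ are root-conjugate, then λ and σ are root-conjugate. In other words, root-conjugacy is a transitive relation on any set of pairwise compatible vectors. -/
/-- Two vectors are compatible if they are `W`-sortable or root-conjugate. -/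
def Compatible {k : ℕ} (l m : Fin k → ℤ) : Prop := WSortable l m ∨ RootConjugate l m

/-! Write `l - m = e_a - e_b` and `m - s = e_c - e_d`, so that `l - s = e_a - e_b + e_c - e_d`.
If `c = b` or `d = a` the middle terms cancel and `l - s` is a single root (or `0`, which
`l ≠ s` excludes); otherwise `s a < s b` although `l b < l a`, and `l - s` is positive at both
`a` and `c` (or equal to `2` at `a = c`), so `l, s` are neither `W`-sortable nor
root-conjugate. -/

section

variable {k : ℕ}

lemma stdBasis_sub_stdBasis_apply_le_one (a b i : Fin k) :
    stdBasis k a i - stdBasis k b i ≤ 1 := by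
  unfold stdBasis; split_ifs <;> omega

lemma eq_of_stdBasis_sub_stdBasis_apply_pos {a b i : Fin k}
    (h : 0 < stdBasis k a i - stdBasis k b i) : i = a := by
  unfold stdBasis at h; split_ifs at h with hia <;> first | exact hia | omega

/-- Root-conjugacy needs no permutation: the swap is forced once `l a = l b + 1`. -/
theorem rootConjugate_iff {l m : Fin k → ℤ} :
    RootConjugate l m ↔
      ∃ a b, l a = l b + 1 ∧ ∀ i, l i - m i = stdBasis k a i - stdBasis k b i := by
  constructor
  · rintro ⟨a, b, hab, hdiff, hswap⟩
    refine ⟨a, b, ?_, hdiff⟩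
    have ha := hdiff a
    rw [hswap a, Equiv.swap_apply_left] at ha
    simp only [stdBasis, if_pos, if_neg hab] at ha
    omega
  · rintro ⟨a, b, hlab, hdiff⟩
    have hab : a ≠ b := by rintro rfl; omega
    refine ⟨a, b, hab, hdiff, fun i => ?_⟩
    have hi := hdiff i
    rcases eq_or_ne i a with rfl | hia
    · simp only [stdBasis, if_pos, if_neg hab, Equiv.swap_apply_left] at hi ⊢; omega
    rcases eq_or_ne i b with rfl | hib
    · simp only [stdBasis, if_pos, if_neg hia, Equiv.swap_apply_right] at hi ⊢; omega
    simp only [stdBasis, if_neg hia, if_neg hib, Equiv.swap_apply_of_ne_of_ne hia hib] at hi ⊢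
    omega

theorem WSortable.le_of_lt {l m : Fin k → ℤ} (h : WSortable l m) {x y : Fin k}
    (hl : l y < l x) : m y ≤ m x := by
  obtain ⟨w, hwl, hwm⟩ := h
  rcases le_total (w.symm x) (w.symm y) with hxy | hyx
  · simpa using hwm _ _ hxy
  · have := hwl _ _ hyx
    simp only [Equiv.apply_symm_apply] at this
    omega

theorem not_compatible_of_sub_eq_two_roots {l s : Fin k → ℤ} {a b c d : Fin k}
    (hab : a ≠ b) (hcd : c ≠ d) (hcb : c ≠ b) (hda : d ≠ a) (hlab : l a = l b + 1)
    (hdiff : ∀ i, l i - s i =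
      stdBasis k a i - stdBasis k b i + (stdBasis k c i - stdBasis k d i)) :
    ¬ Compatible l s := by
  have eval : ∀ i, l i - s i = (if i = a then 1 else 0) - (if i = b then 1 else 0) +
      ((if i = c then 1 else 0) - (if i = d then 1 else 0)) := hdiff
  have ha := eval a
  have hb := eval b
  have hc := eval c
  rw [if_pos rfl, if_neg hab, if_neg hda.symm] at ha
  rw [if_neg hab.symm, if_pos rfl, if_neg hcb.symm] at hb
  rw [if_neg hcb, if_pos rfl, if_neg hcd] at hc
  rintro (hw | hr)
  · have := hw.le_of_lt (x := a) (y := b) (by omega)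
    split_ifs at ha hb <;> omega
  · obtain ⟨a', b', -, hdiff'⟩ := rootConjugate_iff.1 hr
    have hpos : ∀ i, 0 < l i - s i → i = a' := fun i h =>
      eq_of_stdBasis_sub_stdBasis_apply_pos (b := b') (hdiff' i ▸ h)
    have hca : c = a := (hpos c (by split_ifs at hc <;> omega)).trans
      (hpos a (by split_ifs at ha <;> omega)).symm
    have := hdiff' a ▸ stdBasis_sub_stdBasis_apply_le_one a' b' a
    rw [if_pos hca.symm] at ha
    omega

end

theorem stmt3_general {k : ℕ} (l m s : Fin k → ℤ)
    (hls : l ≠ s) (cls : Compatible l s)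
    (rlm : RootConjugate l m) (rms : RootConjugate m s) :
    RootConjugate l s := by
  obtain ⟨a, b, hlab, hlm⟩ := rootConjugate_iff.1 rlm
  obtain ⟨c, d, hmcd, hms⟩ := rootConjugate_iff.1 rms
  have hab : a ≠ b := by rintro rfl; omega
  have hcd : c ≠ d := by rintro rfl; omega
  have hdiff : ∀ i, l i - s i =
      stdBasis k a i - stdBasis k b i + (stdBasis k c i - stdBasis k d i) := fun i => by
    rw [← hlm i, ← hms i]; ring
  by_cases hcb : c = b
  · subst hcb
    by_cases hda : d = a
    · subst hda
      exact absurd (funext fun i => by have := hdiff i; omega) hls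
    have hmc := hlm c
    have hmd := hlm d
    simp only [stdBasis, if_pos, if_neg hab.symm, if_neg hda, if_neg hcd.symm] at hmc hmd
    exact rootConjugate_iff.2 ⟨a, d, by omega, fun i => by rw [hdiff i]; ring⟩
  by_cases hda : d = a
  · subst hda
    have hmc := hlm c
    have hmd := hlm d
    simp only [stdBasis, if_pos, if_neg hcd, if_neg hcb, if_neg hab] at hmc hmd
    exact rootConjugate_iff.2 ⟨c, b, by omega, fun i => by rw [hdiff i]; ring⟩
  exact absurd cls (not_compatible_of_sub_eq_two_roots hab hcd hcb hda hlab hdiff)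

/-- On a set of pairwise compatible vectors, root-conjugacy is transitive. -/
theorem stmt3 {k : ℕ} (l m s : Fin k → ℤ)
    (hlm : l ≠ m) (hms : m ≠ s) (hls : l ≠ s)
    (clm : Compatible l m) (cms : Compatible m s) (cls : Compatible l s)
    (rlm : RootConjugate l m) (rms : RootConjugate m s) :
    RootConjugate l s :=
  stmt3_general l m s hls cls rlm rms
end

section
/- Let C be a finite family of vectors in ℤ^k such that every pair of vectors in C is W-sortable (there is a permutation simultaneously weakly sorting both). Then there exists a single permutation w of [k] such that every vector λ ∈ C satisfies λ_{w(1)} ≥ λ_{w(2)} ≥ ⋯ ≥ λ_{w(k)}. -/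
open Finset

theorem WSortable.le_and_le_or_le_and_le {k : ℕ} {l m : Fin k → ℤ} (h : WSortable l m)
    (a b : Fin k) : (l a ≤ l b ∧ m a ≤ m b) ∨ (l b ≤ l a ∧ m b ≤ m a) := by
  obtain ⟨w, hl, hm⟩ := h
  rcases le_total (w.symm a) (w.symm b) with hab | hba
  · right
    simpa using And.intro (hl _ _ hab) (hm _ _ hab)
  · left
    simpa using And.intro (hl _ _ hba) (hm _ _ hba)

theorem coord_le_total_of_pairwise_wSortable {k : ℕ} {C : Set (Fin k → ℤ)}
    (h : C.Pairwise WSortable) (a b : Fin k) :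
    (∀ l ∈ C, l a ≤ l b) ∨ (∀ l ∈ C, l b ≤ l a) := by
  by_contra! hc
  obtain ⟨⟨l, hl, hlba⟩, ⟨m, hm, hmab⟩⟩ := hc
  have hne : l ≠ m := by
    rintro rfl
    exact lt_asymm hlba hmab
  rcases (h hl hm hne).le_and_le_or_le_and_le a b with ⟨hl', -⟩ | ⟨-, hm'⟩
  · exact hl'.not_gt hlba
  · exact hm'.not_gt hmab

theorem coord_le_of_sum_le {ι α : Type*} [AddCommMonoid α] [PartialOrder α]
    [IsOrderedCancelAddMonoid α] {C : Finset (ι → α)} {a b : ι}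
    (htot : (∀ l ∈ C, l a ≤ l b) ∨ (∀ l ∈ C, l b ≤ l a))
    (hs : ∑ l ∈ C, l a ≤ ∑ l ∈ C, l b) : ∀ l ∈ C, l a ≤ l b := by
  rcases htot with hab | hba
  · exact hab
  · have heq : ∑ l ∈ C, l b = ∑ l ∈ C, l a := le_antisymm (sum_le_sum hba) hs
    intro l hl
    exact ((sum_eq_sum_iff_of_le hba).mp heq l hl).ge

theorem Tuple.exists_perm_antitone_comp {n : ℕ} {α : Type*} [LinearOrder α] (f : Fin n → α) :
    ∃ w : Equiv.Perm (Fin n), Antitone (f ∘ w) :=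
  ⟨Tuple.sort (OrderDual.toDual ∘ f), Tuple.monotone_sort (OrderDual.toDual ∘ f)⟩

/-- Flagness of the type `A` Coxeter complex: if every pair of vectors in a finite family
is `W`-sortable, then a single permutation simultaneously sorts all of them. -/
theorem stmt4 {k : ℕ} (C : Finset (Fin k → ℤ))
    (h : ∀ l ∈ C, ∀ m ∈ C, l ≠ m → WSortable l m) :
    ∃ w : Equiv.Perm (Fin k), ∀ l ∈ C, ∀ i j : Fin k, i ≤ j → l (w j) ≤ l (w i) := by
  have hpair : (C : Set (Fin k → ℤ)).Pairwise WSortable := fun l hl m hm => h l hl m hm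
  obtain ⟨w, hw⟩ := Tuple.exists_perm_antitone_comp fun a => ∑ l ∈ C, l a
  exact ⟨w, fun l hl i j hij =>
    coord_le_of_sum_le (coord_le_total_of_pairwise_wSortable hpair _ _) (hw hij) l hl⟩
end

section
/- Let C be a finite multiset of pairwise compatible vectors in ℤ^k that is basic (every vector that is root-conjugate to some other element of C appears with multiplicity one). Partition C into root-conjugacy classes (each non-root-conjugate vector is a singleton class) and for each class O let its class sum be Σ_{λ∈O} λ ∈ ℤ^k. Then the collection of class sums is pairwise W-sortable. -/
open scoped Classical

/-- A multiset is basic if every vector root-conjugate to some member of the multiset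
appears with multiplicity one. -/
def Basic {k : ℕ} (C : Multiset (Fin k → ℤ)) : Prop :=
  ∀ l ∈ C, (∃ m ∈ C, RootConjugate l m) → C.count l = 1

/-- The class sum of the root-conjugacy class of `l` in `C`: the sum of `l` together
with all members of `C` root-conjugate to it (each root-conjugate member occurs once). -/
noncomputable def classSum {k : ℕ} (C : Multiset (Fin k → ℤ)) (l : Fin k → ℤ) : Fin k → ℤ :=
  ∑ m ∈ C.toFinset.filter (fun m => m = l ∨ RootConjugate l m), m


/-!
Call `(i, j)` a conflict of a pair `x, y` if `x i < x j` and `y j < y i`; a pair is `W`-sortable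
exactly when it has no conflict. Were `(i, j)` a conflict of the class sums of `l` and `m`, some
`x` in the class of `l` and some `y` in the class of `m` would conflict at `(i, j)`, and
compatibility forces `y = x ∘ (j i)` with `x j = x i + 1`. Then `y` lies in the class of `l` as
well, and every other member `ν` of `C` has `ν i = ν j`, since otherwise `ν` would conflict with
`x` or with `y` and hence coincide with the other one. So the contributions of `x` and `y` to
the class sum of `l` cancel at `(i, j)`, and that class sum has equal `i`- and `j`-coordinates.

Membership of `y` in the class of `l` uses that root-conjugacy is transitive among compatible
vectors: a vector is `W`-sortable against a rearrangement of itself only if the two coincide,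
because a sorted rearrangement is unique.
-/

open Finset

section Vectors

variable {k : ℕ} {x y z ν : Fin k → ℤ} {i j : Fin k}

theorem wSortable_iff : WSortable x y ↔ ∀ i j, x i < x j → y i ≤ y j := by
  constructor
  · rintro ⟨w, hx, hy⟩ i j hij
    rcases le_total (w.symm i) (w.symm j) with h | h
    · have := hx _ _ h
      simp only [Equiv.apply_symm_apply] at this
      omega
    · simpa using hy _ _ h
  · intro h
    -- sort the coordinates by `x`, breaking ties by `y`, both decreasingly
    set σ := Tuple.sort fun t => toLex (-x t, -y t)
    refine ⟨σ, fun a b hab => ?_, fun a b hab => ?_⟩ <;>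
    · have hle : toLex (-x (σ a), -y (σ a)) ≤ toLex (-x (σ b), -y (σ b)) :=
        Tuple.monotone_sort (fun t => toLex (-x t, -y t)) hab
      have := h (σ b) (σ a)
      rcases Prod.Lex.toLex_le_toLex.1 hle with hlt | ⟨heq, hle⟩ <;> omega

theorem WSortable.comp_perm_eq {π : Equiv.Perm (Fin k)} (h : WSortable x (x ∘ π)) :
    x ∘ π = x := by
  obtain ⟨w, hx, hy⟩ := h
  have key : OrderDual.toDual ∘ x ∘ w = OrderDual.toDual ∘ x ∘ (π * w) :=
    Tuple.unique_monotone (f := OrderDual.toDual ∘ x) (fun a b hab => hx a b hab)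
      (fun a b hab => hy a b hab)
  funext t
  simpa using (congrFun key (w.symm t)).symm

theorem rootConjugate_comp_swap {a b : Fin k} (h : x a = x b + 1) :
    RootConjugate x (x ∘ Equiv.swap a b) := by
  have hab : a ≠ b := by rintro rfl; omega
  refine ⟨a, b, hab, fun t => ?_, fun t => rfl⟩
  simp only [stdBasis, Function.comp_apply]
  by_cases hta : t = a
  · subst hta; simp [hab, h]
  by_cases htb : t = b
  · subst htb; simp [hta, h]
  simp [hta, htb, Equiv.swap_apply_of_ne_of_ne]

theorem Compatible.eq_comp_swap (h : Compatible x y) (hx : x i < x j) (hy : y j < y i) :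
    x j = x i + 1 ∧ y = x ∘ Equiv.swap j i := by
  rcases h with hs | ⟨a, b, -, hd, hs⟩
  · exact absurd (wSortable_iff.1 hs i j hx) (not_le.2 hy)
  · have hdi := hd i
    have hdj := hd j
    obtain ⟨rfl, rfl⟩ : j = a ∧ i = b := by
      simp only [stdBasis] at hdi hdj
      by_contra hne
      split_ifs at hdi hdj <;> omega
    refine ⟨?_, funext hs⟩
    have := hs j
    simp only [stdBasis, Equiv.swap_apply_left] at hdj this
    split_ifs at hdj <;> omega

theorem RootConjugate.trans_of_compatible (hxy : RootConjugate x y) (hyz : RootConjugate y z)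
    (hxz : Compatible x z) (hne : x ≠ z) : RootConjugate x z := by
  obtain ⟨a, b, -, -, hy⟩ := hxy
  obtain ⟨p, q, -, -, hz⟩ := hyz
  refine hxz.resolve_left fun hs => hne ?_
  have hzx : z = x ∘ (Equiv.swap a b * Equiv.swap p q) := funext fun t => by simp [hz, hy]
  rw [hzx] at hs ⊢
  exact hs.comp_perm_eq.symm

theorem apply_eq_of_compatible (hx : x i < x j) (hxν : Compatible x ν)
    (hνy : Compatible ν (x ∘ Equiv.swap j i)) (hνx : ν ≠ x) (hνy' : ν ≠ x ∘ Equiv.swap j i) :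
    ν i = ν j := by
  have hy : (x ∘ Equiv.swap j i) j < (x ∘ Equiv.swap j i) i := by simpa using hx
  rcases lt_trichotomy (ν i) (ν j) with h | h | h
  · obtain ⟨-, hswap⟩ := hνy.eq_comp_swap h hy
    exact absurd ((Equiv.swap j i).surjective.injective_comp_right hswap).symm hνx
  · exact h
  · exact absurd (hxν.eq_comp_swap hx h).2 hνy'

end Vectors

section Classes

variable {k : ℕ} {C : Multiset (Fin k → ℤ)} {l x y : Fin k → ℤ}

noncomputable def rootClass (C : Multiset (Fin k → ℤ)) (l : Fin k → ℤ) : Finset (Fin k → ℤ) :=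
  C.toFinset.filter (fun m => m = l ∨ RootConjugate l m)

theorem mem_rootClass : x ∈ rootClass C l ↔ x ∈ C ∧ (x = l ∨ RootConjugate l x) := by
  simp [rootClass]

theorem classSum_apply (i : Fin k) : classSum C l i = ∑ m ∈ rootClass C l, m i :=
  Finset.sum_apply i _ _

theorem RootConjugate.mem_rootClass (hcomp : ∀ l ∈ C, ∀ m ∈ C, l ≠ m → Compatible l m)
    (hl : l ∈ C) (hxy : RootConjugate x y) (hy : y ∈ C) (hx : x ∈ rootClass C l) :
    y ∈ rootClass C l := by
  rw [_root_.mem_rootClass] at hx ⊢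
  refine ⟨hy, ?_⟩
  obtain ⟨-, rfl | hlx⟩ := hx
  · exact Or.inr hxy
  · by_cases hyl : y = l
    · exact Or.inl hyl
    · exact Or.inr (hlx.trans_of_compatible hxy (hcomp l hl y hy (Ne.symm hyl)) (Ne.symm hyl))

end Classes

theorem stmt5_general {k : ℕ} (C : Multiset (Fin k → ℤ))
    (hcomp : ∀ l ∈ C, ∀ m ∈ C, l ≠ m → Compatible l m) :
    ∀ l ∈ C, ∀ m ∈ C, WSortable (classSum C l) (classSum C m) := by
  intro l hl m _
  refine wSortable_iff.2 fun i j hσ => not_lt.1 fun hτ => ?_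
  simp only [classSum_apply] at hσ hτ
  obtain ⟨x, hxl, hx⟩ := exists_lt_of_sum_lt hσ
  obtain ⟨y, hym, hy⟩ := exists_lt_of_sum_lt hτ
  have hxC := (mem_rootClass.1 hxl).1
  have hyC := (mem_rootClass.1 hym).1
  have hxy : x ≠ y := by rintro rfl; omega
  obtain ⟨hxji, rfl⟩ := (hcomp x hxC _ hyC hxy).eq_comp_swap hx hy
  have hyl := (rootConjugate_comp_swap hxji).mem_rootClass hcomp hl hyC hxl
  have hfix : ∀ ν ∈ rootClass C l, ν ≠ x ∧ ν ≠ x ∘ Equiv.swap j i → ν i - ν j = 0 := by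
    rintro ν hν ⟨hνx, hνy⟩
    have hνC := (mem_rootClass.1 hν).1
    rw [sub_eq_zero]
    exact apply_eq_of_compatible hx (hcomp x hxC ν hνC (Ne.symm hνx))
      (hcomp ν hνC _ hyC hνy) hνx hνy
  have hcancel := sum_eq_add_of_mem (f := fun ν => ν i - ν j) _ _ hxl hyl hxy hfix
  simp only [sum_sub_distrib, Function.comp_apply, Equiv.swap_apply_left,
    Equiv.swap_apply_right] at hcancel
  omega

/-- In a basic multiset of pairwise compatible vectors, the class sums of the
root-conjugacy classes are pairwise `W`-sortable. -/
theorem stmt5 {k : ℕ} (C : Multiset (Fin k → ℤ))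
    (hcomp : ∀ l ∈ C, ∀ m ∈ C, l ≠ m → Compatible l m)
    (hbasic : Basic C) :
    ∀ l ∈ C, ∀ m ∈ C, WSortable (classSum C l) (classSum C m) :=
  stmt5_general C hcomp
end

section
/- Let Q be a finite quiver without loops or oriented 2-cycles, let A be an abelian group, and let wt : V(Q) → A satisfy the balancing condition Σ_{u→v in Q} wt(u) = Σ_{v→u in Q} wt(u) at every vertex v. Let Q′ = μ_v(Q) be the quiver mutation of Q at a vertex v and define wt′(v) = −wt(v) + Σ_{u→v in Q} wt(u), with wt′(x) = wt(x) for x ≠ v. Then (Q′, wt′) again satisfies the balancing condition at every vertex. -/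
/-! For a skew-symmetric exchange matrix `B`, balancing at `w` says that the signed sum
`Σ_u B u w • wt u` vanishes. Mutation at `v` negates this sum at `w = v`. At `w ≠ v`, put
`S = Σ_{u→v} wt u`; balancing at `v` makes the arrows into and out of `v` both carry weight
`S`, so the new arrows through `v` contribute `([B v w]₊ - [-B v w]₊) • S = B v w • S`, while
reversing the arrows between `v` and `w` and giving `v` the weight `S - wt v` changes its
contribution by exactly `-B v w • S`. -/

open Finset

section QuiverMutation

variable {V A : Type*} [AddCommGroup A]

theorem toNat_smul_sub_neg_toNat_smul (n : ℤ) (a : A) :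
    n.toNat • a - (-n).toNat • a = n • a := by
  rw [← natCast_zsmul, ← natCast_zsmul, ← sub_smul, Int.toNat_sub_toNat_neg]

theorem sum_toNat_smul_sub_sum_toNat_smul [Fintype V] {B : V → V → ℤ}
    (hskew : ∀ x y, B x y = -B y x) (f : V → A) (w : V) :
    ∑ u, (B u w).toNat • f u - ∑ u, (B w u).toNat • f u = ∑ u, B u w • f u := by
  rw [← sum_sub_distrib]
  refine sum_congr rfl fun u _ => ?_
  rw [hskew w u, toNat_smul_sub_neg_toNat_smul]

variable [DecidableEq V]

def exchangeMutation (B : V → V → ℤ) (v x y : V) : ℤ :=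
  if x = v ∨ y = v then -B x y
  else B x y + max (B x v) 0 * max (B v y) 0 - max (-B x v) 0 * max (-B v y) 0

theorem exchangeMutation_skew {B : V → V → ℤ} (hskew : ∀ x y, B x y = -B y x) (v x y : V) :
    exchangeMutation B v x y = -exchangeMutation B v y x := by
  unfold exchangeMutation
  by_cases h : x = v ∨ y = v
  · rw [if_pos h, if_pos h.symm, hskew x y]
  · rw [if_neg h, if_neg (fun h' => h h'.symm), hskew y x, hskew y v, hskew v x]
    simp only [neg_neg]
    ring

theorem exchangeMutation_of_ne {B : V → V → ℤ} (hskew : ∀ x y, B x y = -B y x) {v x y : V}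
    (hx : x ≠ v) (hy : y ≠ v) :
    exchangeMutation B v x y
      = B x y + (B v y).toNat * (B x v).toNat - (-B v y).toNat * (B v x).toNat := by
  rw [exchangeMutation, if_neg (by tauto), ← hskew v x]
  simp only [Int.toNat_eq_max]
  ring

variable [Fintype V]

def weightMutation (B : V → V → ℤ) (wt : V → A) (v : V) : V → A :=
  Function.update wt v (-wt v + ∑ u, (B u v).toNat • wt u)

theorem sum_exchangeMutation_smul_self {B : V → V → ℤ} (hdiag : ∀ x, B x x = 0)
    (wt : V → A) (v : V) :
    ∑ u, exchangeMutation B v u v • weightMutation B wt v u = -∑ u, B u v • wt u := by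
  rw [← sum_neg_distrib]
  refine sum_congr rfl fun u _ => ?_
  rw [exchangeMutation, if_pos (Or.inr rfl), neg_smul]
  by_cases hu : u = v
  · subst hu
    rw [hdiag, zero_smul, zero_smul]
  · rw [weightMutation, Function.update_of_ne hu]

theorem sum_exchangeMutation_smul_of_ne {B : V → V → ℤ} (hskew : ∀ x y, B x y = -B y x)
    {wt : V → A} {v : V} (hbal : ∑ u, (B u v).toNat • wt u = ∑ u, (B v u).toNat • wt u)
    {w : V} (hw : w ≠ v) :
    ∑ u, exchangeMutation B v u w • weightMutation B wt v u = ∑ u, B u w • wt u := by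
  have hdiag (x : V) : B x x = 0 := by have := hskew x x; omega
  set S := ∑ u, (B u v).toNat • wt u
  have hterm (u : V) (hu : u ∈ univ.erase v) :
      exchangeMutation B v u w • weightMutation B wt v u
        = B u w • wt u + (B v w).toNat • ((B u v).toNat • wt u)
          - (-B v w).toNat • ((B v u).toNat • wt u) := by
    have hu : u ≠ v := ne_of_mem_erase hu
    rw [exchangeMutation_of_ne hskew hu hw, weightMutation, Function.update_of_ne hu,
      sub_smul, add_smul, mul_smul, mul_smul]
    simp only [natCast_zsmul]
  have hin : ∑ u ∈ univ.erase v, (B u v).toNat • wt u = S :=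
    sum_erase _ (by rw [hdiag, Int.toNat_zero, zero_smul])
  have hout : ∑ u ∈ univ.erase v, (B v u).toNat • wt u = S := by
    rw [sum_erase _ (by rw [hdiag, Int.toNat_zero, zero_smul]), hbal]
  rw [← add_sum_erase _ _ (mem_univ v), sum_congr rfl hterm, sum_sub_distrib, sum_add_distrib,
    ← smul_sum, ← smul_sum, hin, hout, sum_erase_eq_sub (mem_univ v), exchangeMutation,
    if_pos (Or.inl rfl), weightMutation, Function.update_self, add_sub_assoc,
    toNat_smul_sub_neg_toNat_smul, neg_smul, smul_add, smul_neg]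
  abel

end QuiverMutation

/-- Mutation of a balanced weighted quiver preserves the balancing condition.

A quiver without loops or oriented 2-cycles is encoded by its skew-symmetric exchange
matrix `B : V → V → ℤ`, where `(B u v).toNat` is the number of arrows `u → v`.  The
weights `wt : V → A` satisfy the balancing condition `Σ_{u→v} wt u = Σ_{v→u} wt u` at
every vertex `v`.  Mutation at `v` replaces `B` by `B'` (standard matrix mutation) and
`wt v` by `-wt v + Σ_{u→v} wt u`.  Then `(B', wt')` again satisfies the balancing
condition at every vertex. -/
theorem stmt8 {V A : Type*} [Fintype V] [DecidableEq V] [AddCommGroup A]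
    (B B' : V → V → ℤ) (hskew : ∀ x y, B x y = - B y x)
    (wt : V → A)
    (hbal : ∀ w : V, ∑ u : V, (B u w).toNat • wt u = ∑ u : V, (B w u).toNat • wt u)
    (v : V)
    (hB' : ∀ x y, B' x y = if x = v ∨ y = v then - B x y
      else B x y + max (B x v) 0 * max (B v y) 0 - max (- B x v) 0 * max (- B v y) 0)
    (wt' : V → A)
    (hwt' : wt' = Function.update wt v (- wt v + ∑ u : V, (B u v).toNat • wt u)) :
    ∀ w : V, ∑ u : V, (B' u w).toNat • wt' u = ∑ u : V, (B' w u).toNat • wt' u := by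
  obtain rfl : B' = exchangeMutation B v := funext₂ hB'
  obtain rfl : wt' = weightMutation B wt v := hwt'
  have hdiag (x : V) : B x x = 0 := by have := hskew x x; omega
  have hbal_zero (w : V) : ∑ u, B u w • wt u = 0 := by
    rw [← sum_toNat_smul_sub_sum_toNat_smul hskew, hbal w, sub_self]
  intro w
  rw [← sub_eq_zero, sum_toNat_smul_sub_sum_toNat_smul (exchangeMutation_skew hskew v)]
  by_cases hw : w = v
  · subst hw
    rw [sum_exchangeMutation_smul_self hdiag, hbal_zero, neg_zero]
  · rw [sum_exchangeMutation_smul_of_ne hskew (hbal v) hw, hbal_zero]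
end

section
/- Let V be a k-dimensional vector space over a field with basis v_1, …, v_k, and let u : V → V be a linear map with u(v_i) − v_i ∈ span{v_1, …, v_{i−1}} for all i. For an a-subset T = {t_1 < ⋯ < t_a} of [k] write v_T = v_{t_1} ∧ ⋯ ∧ v_{t_a} ∈ ⋀^a V. Then (⋀^a u − id)(v_T) lies in the span of {v_{T′} : T′ an a-subset with T′ < T in termwise order}. -/
open ExteriorAlgebra

/-- The wedge `v_T = v_{t₁} ∧ ⋯ ∧ v_{t_a}` of the family `b` over the subset `T`,
taken in increasing order, as an element of the exterior algebra. -/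
noncomputable def wedge {F V : Type*} [Field F] [AddCommGroup V] [Module F V] {k : ℕ}
    (b : Fin k → V) (T : Finset (Fin k)) : ExteriorAlgebra F V :=
  ((T.sort (· ≤ ·)).map fun i => ExteriorAlgebra.ι F (b i)).prod

/-- Termwise (Gale) order on `a`-element subsets of `Fin k`. -/
def TermLEF {k : ℕ} (a : ℕ) (T S : Finset (Fin k)) (hT : T.card = a) (hS : S.card = a) :
    Prop :=
  ∀ i : Fin a, T.orderEmbOfFin hT i ≤ S.orderEmbOfFin hS i

/-!
Write `v_T` as the product `ι v_{t₁} * ⋯ * ι v_{t_a}` over the sorted list `t` of elements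
of `T`. Since `u v_t = v_t + (a combination of the v_j with j < t)`, induction on the length
of `t` shows that `⋀u v_T - v_T` is a combination of products `ι v_{s₁} * ⋯ * ι v_{s_a}`
with `sᵢ ≤ tᵢ` for all `i` and `s ≠ t`. Sorting `s` changes such a product only by a sign,
and kills it if `s` has a repeated entry. The sorted list is still termwise below `t`, and it
is not `t` itself, since comparing sums shows that a rearrangement of a list of numbers that
is termwise below it is the list itself.
-/

namespace List

theorem Forall₂.eq_of_perm {α : Type*} [AddCommMonoid α] [PartialOrder α]
    [IsOrderedCancelAddMonoid α] {l l' : List α} (h : Forall₂ (· ≤ ·) l l') (hp : l ~ l') :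
    l = l' := by
  induction h with
  | nil => rfl
  | @cons a b l l' hab h ih =>
    have hsum : a + l.sum = b + l'.sum := by simpa using hp.sum_eq
    obtain rfl : a = b := hab.lt_or_eq.resolve_left fun hlt =>
      hsum.not_lt (add_lt_add_of_lt_of_le hlt h.sum_le_sum)
    rw [ih ((perm_cons a).1 hp)]

variable {α : Type*} [LinearOrder α]

theorem Forall₂.orderedInsert_le_cons {x t : α} {N L : List α} (h : Forall₂ (· ≤ ·) N L)
    (hxt : x ≤ t) (hL : (t :: L).Pairwise (· ≤ ·)) :
    Forall₂ (· ≤ ·) (N.orderedInsert (· ≤ ·) x) (t :: L) := by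
  induction h generalizing t with
  | nil => simpa using hxt
  | @cons n l N L hnl h ih =>
    have htl : t ≤ l := (pairwise_cons.1 hL).1 l mem_cons_self
    rw [orderedInsert_cons]
    split_ifs with hxn
    · exact .cons hxt (.cons hnl h)
    · exact .cons ((not_le.1 hxn).le.trans hxt) (ih (hxt.trans htl) (pairwise_cons.1 hL).2)

theorem Forall₂.insertionSort_le {M L : List α} (h : Forall₂ (· ≤ ·) M L)
    (hL : L.Pairwise (· ≤ ·)) : Forall₂ (· ≤ ·) (M.insertionSort (· ≤ ·)) L := by
  induction h with
  | nil => exact .nil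
  | cons hxt _ ih => exact (ih (pairwise_cons.1 hL).2).orderedInsert_le_cons hxt hL

end List

section ExteriorPowers

open Submodule

variable (R : Type*) {M κ : Type*} [CommRing R] [AddCommGroup M] [Module R M]

noncomputable def wedgeList (b : κ → M) (l : List κ) : ExteriorAlgebra R M :=
  (l.map fun i => ι R (b i)).prod

variable {R}

section wedgeList

variable (b : κ → M)

@[simp]
theorem wedgeList_nil : wedgeList R b [] = 1 := rfl

@[simp]
theorem wedgeList_cons (x : κ) (l : List κ) :
    wedgeList R b (x :: l) = ι R (b x) * wedgeList R b l := rfl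

theorem List.Perm.wedgeList_eq_units_smul {l l' : List κ} (hp : l.Perm l') :
    ∃ ε : ℤˣ, wedgeList R b l = ε • wedgeList R b l' := by
  induction hp with
  | nil => exact ⟨1, by simp⟩
  | cons x _ ih =>
    obtain ⟨ε, hε⟩ := ih
    exact ⟨ε, by rw [wedgeList_cons, wedgeList_cons, hε, mul_smul_comm]⟩
  | swap x y l =>
    have hswap : ι R (b y) * ι R (b x) = -(ι R (b x) * ι R (b y)) :=
      eq_neg_of_add_eq_zero_left (ι_add_mul_swap _ _)
    refine ⟨-1, ?_⟩
    simp only [wedgeList_cons, ← mul_assoc]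
    rw [hswap, Units.neg_smul, one_smul, neg_mul]
  | trans _ _ ih₁ ih₂ =>
    obtain ⟨ε₁, h₁⟩ := ih₁
    obtain ⟨ε₂, h₂⟩ := ih₂
    exact ⟨ε₁ * ε₂, by rw [h₁, h₂, mul_smul]⟩

theorem wedgeList_eq_zero_of_not_nodup {l : List κ} (hl : ¬l.Nodup) : wedgeList R b l = 0 := by
  obtain ⟨x, hx⟩ := not_forall_not.1 (mt List.nodup_iff_sublist.2 hl)
  obtain ⟨r, hr⟩ := hx.exists_perm_append
  obtain ⟨ε, hε⟩ := hr.wedgeList_eq_units_smul (R := R) b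
  rw [hε, List.cons_append, List.cons_append, List.nil_append, wedgeList_cons, wedgeList_cons,
    ← mul_assoc, ι_sq_zero, zero_mul, smul_zero]

theorem span_ι_mul_span_wedgeList_le {s : Set κ} {𝒩 𝒩' : Set (List κ)}
    (h : ∀ x ∈ s, ∀ N ∈ 𝒩, x :: N ∈ 𝒩') :
    span R ((fun x => ι R (b x)) '' s) * span R (wedgeList R b '' 𝒩) ≤
      span R (wedgeList R b '' 𝒩') := by
  rw [span_mul_span]
  refine span_mono ?_
  rintro _ ⟨_, ⟨x, hx, rfl⟩, _, ⟨N, hN, rfl⟩, rfl⟩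
  exact ⟨x :: N, h x hx N hN, rfl⟩

theorem map_wedgeList_sub_mem_span [Preorder κ] (u : M →ₗ[R] M)
    (hu : ∀ i, u (b i) - b i ∈ span R (b '' Set.Iio i)) (L : List κ) :
    ExteriorAlgebra.map u (wedgeList R b L) - wedgeList R b L ∈
      span R (wedgeList R b '' {N | List.Forall₂ (· ≤ ·) N L ∧ N ≠ L}) := by
  induction L with
  | nil => simp
  | cons t L ih =>
    set P := wedgeList R b L
    have hP : ExteriorAlgebra.map u P ∈
        span R (wedgeList R b '' {N | List.Forall₂ (· ≤ ·) N L}) := by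
      rw [← sub_add_cancel (ExteriorAlgebra.map u P) P]
      refine add_mem (span_mono ?_ ih)
        (subset_span ⟨L, List.forall₂_same.2 fun _ _ => le_rfl, rfl⟩)
      exact Set.image_mono fun N hN => hN.1
    have hδ : ι R (u (b t) - b t) ∈ span R ((fun x => ι R (b x)) '' Set.Iio t) := by
      rw [← Set.image_image, ← map_span]
      exact mem_map_of_mem (hu t)
    have hsplit : ExteriorAlgebra.map u (wedgeList R b (t :: L)) - wedgeList R b (t :: L) =
        ι R (b t) * (ExteriorAlgebra.map u P - P) +
          ι R (u (b t) - b t) * ExteriorAlgebra.map u P := by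
      simp only [wedgeList_cons, map_mul, map_apply_ι, map_sub]
      noncomm_ring
    rw [hsplit]
    refine add_mem ?_ ?_
    · refine span_ι_mul_span_wedgeList_le b (s := {t}) ?_ (mul_mem_mul ?_ ih)
      · rintro x rfl N ⟨hN, hne⟩
        exact ⟨.cons le_rfl hN, fun h => hne (List.cons_eq_cons.1 h).2⟩
      · rw [Set.image_singleton]
        exact mem_span_singleton_self _
    · refine span_ι_mul_span_wedgeList_le b ?_ (mul_mem_mul hδ hP)
      rintro x hx N hN
      exact ⟨.cons hx.le hN, fun h => hx.ne (List.cons_eq_cons.1 h).1⟩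

end wedgeList

section sorted

variable {k : ℕ} (b : Fin k → M)

theorem wedgeList_mem_span_sorted {L N : List (Fin k)} (hL : L.Pairwise (· ≤ ·))
    (hNL : List.Forall₂ (· ≤ ·) N L) (hne : N ≠ L) :
    wedgeList R b N ∈ span R (wedgeList R b ''
      {N' | N'.Pairwise (· < ·) ∧ List.Forall₂ (· ≤ ·) N' L ∧ N' ≠ L}) := by
  set N' := N.insertionSort (· ≤ ·)
  have hperm : N'.Perm N := List.perm_insertionSort _ N
  obtain ⟨ε, hε⟩ := hperm.symm.wedgeList_eq_units_smul (R := R) b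
  rw [hε]
  by_cases hnd : N'.Nodup
  · refine smul_of_tower_mem _ ε
      (subset_span ⟨N', ⟨?_, hNL.insertionSort_le hL, ?_⟩, rfl⟩)
    · exact (List.sortedLE_insertionSort.sortedLT_of_nodup hnd).pairwise
    · rintro hN'L
      have hval : List.Forall₂ (· ≤ ·) (N.map Fin.val) (L.map Fin.val) :=
        List.forall₂_map_left_iff.2 (List.forall₂_map_right_iff.2 hNL)
      exact hne (List.map_injective_iff.2 Fin.val_injective
        (hval.eq_of_perm ((hN'L ▸ hperm.symm).map _)))
  · rw [wedgeList_eq_zero_of_not_nodup b hnd, smul_zero]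
    exact zero_mem _

theorem map_wedgeList_sub_mem_span_sorted (u : M →ₗ[R] M)
    (hu : ∀ i, u (b i) - b i ∈ span R (b '' Set.Iio i)) {L : List (Fin k)}
    (hL : L.Pairwise (· ≤ ·)) :
    ExteriorAlgebra.map u (wedgeList R b L) - wedgeList R b L ∈ span R (wedgeList R b ''
      {N | N.Pairwise (· < ·) ∧ List.Forall₂ (· ≤ ·) N L ∧ N ≠ L}) := by
  refine span_le.2 ?_ (map_wedgeList_sub_mem_span b u hu L)
  rintro _ ⟨N, ⟨hNL, hne⟩, rfl⟩
  exact wedgeList_mem_span_sorted b hL hNL hne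

end sorted

end ExteriorPowers

theorem termLEF_of_forall₂_sort {k a : ℕ} {T' T : Finset (Fin k)} (hT' : T'.card = a)
    (hT : T.card = a) (h : List.Forall₂ (· ≤ ·) T'.sort T.sort) : TermLEF a T' T hT' hT :=
  fun i => (List.forall₂_iff_get.1 h).2 i _ _

/-- If `u` is upper unitriangular with respect to a basis `b` (i.e.
`u(bᵢ) − bᵢ ∈ span{bⱼ : j < i}`), then for any `a`-subset `T`, `(⋀^a u − id)(v_T)` lies
in the span of the wedges `v_{T'}` for `a`-subsets `T'` strictly below `T` in termwise
order. -/
theorem stmt11 {F V : Type*} [Field F] [AddCommGroup V] [Module F V] {k a : ℕ}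
    (b : Module.Basis (Fin k) F V) (u : V →ₗ[F] V)
    (hu : ∀ i : Fin k, u (b i) - b i ∈
      Submodule.span F {x | ∃ j : Fin k, j < i ∧ x = b j})
    (T : Finset (Fin k)) (hT : T.card = a) :
    ExteriorAlgebra.map u (wedge (F := F) (⇑b) T) - wedge (F := F) (⇑b) T ∈
      Submodule.span F {x | ∃ (T' : Finset (Fin k)) (hT' : T'.card = a),
        TermLEF a T' T hT' hT ∧ T' ≠ T ∧ x = wedge (F := F) (⇑b) T'} := by
  have hu' : ∀ i, u (b i) - b i ∈ Submodule.span F (b '' Set.Iio i) := fun i => by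
    convert hu i using 2
    ext x
    simp [eq_comm]
  refine Submodule.span_le.2 ?_
    (map_wedgeList_sub_mem_span_sorted b u hu' (T.pairwise_sort (· ≤ ·)))
  rintro _ ⟨N, ⟨hN, hNT, hne⟩, rfl⟩
  have hsort : N.toFinset.sort = N := (List.toFinset_sort (· ≤ ·) hN.nodup).2 (hN.imp le_of_lt)
  have hcard : N.toFinset.card = a := by
    rw [← Finset.length_sort (· ≤ ·), hsort, hNT.length_eq, Finset.length_sort, hT]
  exact Submodule.subset_span ⟨N.toFinset, hcard,
    termLEF_of_forall₂_sort hcard hT (hsort.symm ▸ hNT), fun h => hne (by rw [← hsort, h]),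
    by rw [wedge, hsort]; rfl⟩
end

section
/- Let V be a k-dimensional vector space with basis v_1, …, v_k and let u be upper unitriangular in this basis (u(v_i) − v_i ∈ span{v_1,…,v_{i−1}}). Let S be an a-subset of [k] with ℓ(S) = Σ_i (s_i − i). Then for every a-subset T with T < S in termwise order we have (⋀^a u − id)^{ℓ(S)}(v_T) = 0, and (⋀^a u − id)^{ℓ(S)}(v_S) is a scalar multiple of v_{[a]} = v_1 ∧ ⋯ ∧ v_a. -/
open ExteriorAlgebra

/-- `ℓ(S) = Σᵢ (sᵢ − i)`: the rank of `S` in the termwise order (0-indexed). -/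
def ellF {k : ℕ} (a : ℕ) (S : Finset (Fin k)) (hS : S.card = a) : ℕ :=
  ∑ i : Fin a, ((S.orderEmbOfFin hS i : ℕ) - (i : ℕ))

/-! Grade an `a`-subset `T` by its weight `∑ T`. Expanding `(⋀u)(v_T)` multilinearly in the
basis, unitriangularity makes `v_T` appear with coefficient `1`, while every other surviving term
is `±v_{T'}` with `T'` obtained from `T` by lowering some entries, hence of smaller weight.
So `(⋀u − id)^m` lowers the weight by at least `m`. Since `∑ S = ℓ(S) + ∑ [a]` and `[a]` is the
unique `a`-subset of minimal weight `∑ [a]`, `ℓ(S)` steps kill `v_T` for `T < S` (which is lighter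
than `S`) and push `v_S` into the line spanned by `v_{[a]}`. -/

open Finset

theorem Fin.val_le_of_strictMono {a k : ℕ} {f : Fin a → Fin k} (hf : StrictMono f) (i : Fin a) :
    (i : ℕ) ≤ f i :=
  calc (i : ℕ) = #(Iio i) := (Fin.card_Iio i).symm
    _ ≤ #(Iio (f i)) :=
      card_le_card_of_injOn f (fun j hj => by simpa using hf (by simpa using hj))
        hf.injective.injOn
    _ = f i := Fin.card_Iio _

namespace Finset

variable {k a : ℕ}

theorem sum_val_eq_sum_orderEmbOfFin (T : Finset (Fin k)) (hT : #T = a) :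
    ∑ i ∈ T, (i : ℕ) = ∑ i : Fin a, (T.orderEmbOfFin hT i : ℕ) := by
  conv_lhs => rw [← T.map_orderEmbOfFin_univ hT]
  rw [sum_map]
  rfl

theorem sum_val_fin_le_sum_val (T : Finset (Fin k)) (hT : #T = a) :
    ∑ i : Fin a, (i : ℕ) ≤ ∑ i ∈ T, (i : ℕ) := by
  rw [T.sum_val_eq_sum_orderEmbOfFin hT]
  exact sum_le_sum fun i _ => Fin.val_le_of_strictMono (T.orderEmbOfFin hT).strictMono i

theorem eq_filter_val_lt_of_sum_val_le (T : Finset (Fin k)) (hT : #T = a)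
    (h : ∑ i ∈ T, (i : ℕ) ≤ ∑ i : Fin a, (i : ℕ)) :
    T = univ.filter fun i : Fin k => (i : ℕ) < a := by
  have hle := Fin.val_le_of_strictMono (T.orderEmbOfFin hT).strictMono
  rw [T.sum_val_eq_sum_orderEmbOfFin hT] at h
  have hid : ∀ i, (T.orderEmbOfFin hT i : ℕ) = i := fun i =>
    le_antisymm ((sum_eq_sum_iff_of_le fun i _ => hle i).1
      (le_antisymm (sum_le_sum fun i _ => hle i) h) i (mem_univ i)).ge (hle i)
  have hsub : T ⊆ univ.filter fun i : Fin k => (i : ℕ) < a := by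
    intro x hx
    obtain ⟨i, rfl⟩ : x ∈ Set.range (T.orderEmbOfFin hT) := by
      rwa [range_orderEmbOfFin]
    simp [hid i]
  refine eq_of_subset_of_card_le hsub ?_
  rw [Fin.card_filter_val_lt, hT]
  exact min_le_right _ _

theorem ellF_add_sum_val_fin (S : Finset (Fin k)) (hS : #S = a) :
    ellF a S hS + ∑ i : Fin a, (i : ℕ) = ∑ i ∈ S, (i : ℕ) := by
  rw [ellF, S.sum_val_eq_sum_orderEmbOfFin hS, ← sum_add_distrib]
  exact sum_congr rfl fun i _ =>
    Nat.sub_add_cancel (Fin.val_le_of_strictMono (S.orderEmbOfFin hS).strictMono i)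

theorem sum_val_lt_of_termLEF {T S : Finset (Fin k)} (hT : #T = a) (hS : #S = a)
    (hTS : TermLEF a T S hT hS) (hne : T ≠ S) :
    ∑ i ∈ T, (i : ℕ) < ∑ i ∈ S, (i : ℕ) := by
  rw [T.sum_val_eq_sum_orderEmbOfFin hT, S.sum_val_eq_sum_orderEmbOfFin hS]
  refine sum_lt_sum (fun i _ => hTS i) ?_
  by_contra! h
  refine hne (coe_injective ?_)
  rw [← T.range_orderEmbOfFin hT, ← S.range_orderEmbOfFin hS]
  congr 1
  ext i
  exact congrArg Fin.val (le_antisymm (hTS i) (h i (mem_univ i)))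

end Finset

theorem Module.Basis.repr_apply_of_sub_mem_span_lt {ι R M : Type*} [LinearOrder ι] [Ring R]
    [AddCommGroup M] [Module R M] (b : Module.Basis ι R M) {t j : ι} {x : M}
    (hx : x - b t ∈ Submodule.span R {y | ∃ i, i < t ∧ y = b i}) (htj : t ≤ j) :
    b.repr x j = Finsupp.single t 1 j := by
  have himage : {y | ∃ i, i < t ∧ y = b i} = b '' Set.Iio t := by
    ext y
    simp [eq_comm]
  rw [himage, b.mem_span_image] at hx
  have hj : b.repr (x - b t) j = 0 :=
    Finsupp.notMem_support_iff.1 fun h => (hx h).not_ge htj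
  rwa [map_sub, Finsupp.sub_apply, b.repr_self, sub_eq_zero] at hj

theorem ExteriorAlgebra.map_ιMulti_basis {ι R M : Type*} [Fintype ι] [CommRing R]
    [AddCommGroup M] [Module R M] (b : Module.Basis ι R M) (u : M →ₗ[R] M) {n : ℕ}
    (f : Fin n → ι) :
    map u (ιMulti R n fun i => b (f i)) =
      ∑ r : Fin n → ι,
        (∏ i, b.repr (u (b (f i))) (r i)) • ιMulti R n fun i => b (r i) := by
  classical
  have hexpand : (fun i => u (b (f i))) = fun i => ∑ j, b.repr (u (b (f i))) j • b j :=
    funext fun i => (b.sum_repr _).symm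
  rw [map_apply_ιMulti, Function.comp_def, hexpand]
  exact ((ιMulti R n).toMultilinearMap.map_sum _).trans
    (sum_congr rfl fun r _ => (ιMulti R n).toMultilinearMap.map_smul_univ _ _)

section Wedge

variable {F V : Type*} [Field F] [AddCommGroup V] [Module F V] {k a : ℕ}

theorem wedge_eq_ιMulti (b : Fin k → V) (T : Finset (Fin k)) (hT : #T = a) :
    wedge (F := F) b T = ιMulti F a fun i => b (T.orderEmbOfFin hT i) := by
  rw [ιMulti_apply, wedge]
  congr 1
  refine List.ext_getElem (by simp [hT]) fun n _ _ => ?_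
  simp [orderEmbOfFin_apply]

theorem ιMulti_mem_span_wedge_image (b : Fin k → V) {r : Fin a → Fin k}
    (hr : Function.Injective r) :
    (ιMulti F a fun i => b (r i)) ∈ F ∙ wedge (F := F) b (univ.image r) := by
  set σ := Tuple.sort r
  have hcard : #(univ.image r) = a := by rw [card_image_of_injective _ hr, card_fin]
  have hsorted : r ∘ σ = (univ.image r).orderEmbOfFin hcard :=
    orderEmbOfFin_unique hcard (fun i => mem_image_of_mem r (mem_univ _))
      ((Tuple.monotone_sort r).strictMono_of_injective (hr.comp σ.injective))
  have hperm : wedge (F := F) b (univ.image r) = σ.sign • ιMulti F a fun i => b (r i) := by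
    rw [wedge_eq_ιMulti b _ hcard, ← hsorted]
    exact (ιMulti F a).map_perm (fun i => b (r i)) σ
  have hsign :
      (ιMulti F a fun i => b (r i)) = (σ.sign : ℤ) • wedge (F := F) b (univ.image r) := by
    rw [hperm, ← Units.smul_def, smul_smul, Int.units_mul_self, one_smul]
  rw [hsign]
  exact zsmul_mem (Submodule.mem_span_singleton_self _) _

variable (F) in
def wedgeSpan (b : Fin k → V) (a n : ℕ) : Submodule F (ExteriorAlgebra F V) :=
  Submodule.span F (wedge b '' {T | #T = a ∧ ∑ i ∈ T, (i : ℕ) < n})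

theorem wedge_mem_wedgeSpan (b : Fin k → V) {T : Finset (Fin k)} (hT : #T = a) {n : ℕ}
    (h : ∑ i ∈ T, (i : ℕ) < n) : wedge b T ∈ wedgeSpan F b a n :=
  Submodule.subset_span ⟨T, ⟨hT, h⟩, rfl⟩

theorem wedgeSpan_mono (b : Fin k → V) (a : ℕ) {n m : ℕ} (h : n ≤ m) :
    wedgeSpan F b a n ≤ wedgeSpan F b a m :=
  Submodule.span_mono (Set.image_mono fun _ hT => ⟨hT.1, hT.2.trans_le h⟩)

theorem ιMulti_mem_wedgeSpan (b : Fin k → V) (r : Fin a → Fin k) {n : ℕ}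
    (h : ∑ i, (r i : ℕ) < n) : (ιMulti F a fun i => b (r i)) ∈ wedgeSpan F b a n := by
  by_cases hr : Function.Injective r
  · refine (Submodule.span_singleton_le_iff_mem _ _).2 ?_ (ιMulti_mem_span_wedge_image b hr)
    refine wedge_mem_wedgeSpan b (by rw [card_image_of_injective _ hr, card_fin]) ?_
    rwa [sum_image fun _ _ _ _ hij => hr hij]
  · rw [AlternatingMap.map_eq_zero_of_not_injective _ _ fun hbr => hr fun i j hij => ?_]
    · exact Submodule.zero_mem _
    · exact hbr (congrArg b hij)

theorem wedgeSpan_sum_val_fin_eq_bot (b : Fin k → V) (a : ℕ) :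
    wedgeSpan F b a (∑ i : Fin a, (i : ℕ)) = ⊥ := by
  rw [wedgeSpan, Submodule.span_eq_bot]
  rintro _ ⟨T, ⟨hT, hlt⟩, rfl⟩
  exact absurd hlt (T.sum_val_fin_le_sum_val hT).not_gt

theorem wedgeSpan_sum_val_fin_add_one_le (b : Fin k → V) (a : ℕ) :
    wedgeSpan F b a (∑ i : Fin a, (i : ℕ) + 1) ≤
      F ∙ wedge b (univ.filter fun i : Fin k => (i : ℕ) < a) := by
  rw [wedgeSpan, Submodule.span_le]
  rintro _ ⟨T, ⟨hT, hlt⟩, rfl⟩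
  rw [T.eq_filter_val_lt_of_sum_val_le hT (Nat.le_of_lt_succ hlt)]
  exact Submodule.mem_span_singleton_self _

end Wedge

section Unitriangular

variable {F V : Type*} [Field F] [AddCommGroup V] [Module F V] {k a : ℕ}
  (b : Module.Basis (Fin k) F V) (u : V →ₗ[F] V)

theorem map_wedge_sub_wedge_mem_wedgeSpan
    (hu : ∀ i : Fin k, u (b i) - b i ∈ Submodule.span F {x | ∃ j : Fin k, j < i ∧ x = b j})
    {T : Finset (Fin k)} (hT : #T = a) :
    map u (wedge b T) - wedge b T ∈ wedgeSpan F b a (∑ i ∈ T, (i : ℕ)) := by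
  classical
  set f : Fin a → Fin k := ⇑(T.orderEmbOfFin hT)
  have hcoeff {i : Fin a} {j : Fin k} (h : f i ≤ j) :
      b.repr (u (b (f i))) j = Finsupp.single (f i) 1 j :=
    b.repr_apply_of_sub_mem_span_lt (hu (f i)) h
  have hdiag : (∏ i, b.repr (u (b (f i))) (f i)) • (ιMulti F a fun i => b (f i)) =
      ιMulti F a fun i => b (f i) := by
    simp only [hcoeff le_rfl, Finsupp.single_eq_same, prod_const_one, one_smul]
  rw [wedge_eq_ιMulti b T hT, map_ιMulti_basis, ← add_sum_erase _ _ (mem_univ f), hdiag,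
    add_sub_cancel_left]
  refine Submodule.sum_mem _ fun r hr => ?_
  by_cases hle : ∀ i, r i ≤ f i
  · obtain ⟨i₀, hi₀⟩ : ∃ i, r i < f i := by
      by_contra! hge
      exact ne_of_mem_erase hr (funext fun i => le_antisymm (hle i) (hge i))
    refine Submodule.smul_mem _ _ (ιMulti_mem_wedgeSpan b r ?_)
    rw [T.sum_val_eq_sum_orderEmbOfFin hT]
    exact sum_lt_sum (fun i _ => hle i) ⟨i₀, mem_univ _, hi₀⟩
  · obtain ⟨i, hi⟩ := not_forall.1 hle
    rw [prod_eq_zero (mem_univ i) ((hcoeff (not_le.1 hi).le).trans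
      (Finsupp.single_eq_of_ne (not_le.1 hi).ne')), zero_smul]
    exact Submodule.zero_mem _

theorem wedgeSpan_add_one_le_comap
    (hu : ∀ i : Fin k, u (b i) - b i ∈ Submodule.span F {x | ∃ j : Fin k, j < i ∧ x = b j})
    (n : ℕ) :
    wedgeSpan F b a (n + 1) ≤
      (wedgeSpan F b a n).comap ((map u).toLinearMap - LinearMap.id) := by
  rw [wedgeSpan, Submodule.span_le]
  rintro _ ⟨T, ⟨hT, hlt⟩, rfl⟩
  exact wedgeSpan_mono b a (Nat.le_of_lt_succ hlt) (map_wedge_sub_wedge_mem_wedgeSpan b u hu hT)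

theorem pow_apply_mem_wedgeSpan
    (hu : ∀ i : Fin k, u (b i) - b i ∈ Submodule.span F {x | ∃ j : Fin k, j < i ∧ x = b j})
    {n : ℕ} (m : ℕ) {x : ExteriorAlgebra F V} (hx : x ∈ wedgeSpan F b a (n + m)) :
    (((map u).toLinearMap - LinearMap.id : Module.End F (ExteriorAlgebra F V)) ^ m) x ∈
      wedgeSpan F b a n := by
  induction m generalizing x with
  | zero => simpa using hx
  | succ m ih =>
    rw [pow_succ, Module.End.mul_apply]
    exact ih (wedgeSpan_add_one_le_comap b u hu _ hx)

end Unitriangular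

/-- If `u` is upper unitriangular with respect to the basis `b`, then
`(⋀^a u − id)^{ℓ(S)}` annihilates `v_T` for all `a`-subsets `T < S` in termwise order,
and sends `v_S` to a scalar multiple of `v_{[a]} = v₁ ∧ ⋯ ∧ v_a`. -/
theorem stmt12 {F V : Type*} [Field F] [AddCommGroup V] [Module F V] {k a : ℕ}
    (b : Module.Basis (Fin k) F V) (u : V →ₗ[F] V)
    (hu : ∀ i : Fin k, u (b i) - b i ∈
      Submodule.span F {x | ∃ j : Fin k, j < i ∧ x = b j})
    (S : Finset (Fin k)) (hS : S.card = a) :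
    (∀ (T : Finset (Fin k)) (hT : T.card = a),
      TermLEF a T S hT hS → T ≠ S →
      ((((ExteriorAlgebra.map u).toLinearMap - LinearMap.id : Module.End F (ExteriorAlgebra F V)) ^ ellF a S hS))
        (wedge (F := F) (⇑b) T) = 0) ∧
    ∃ c : F, ((((ExteriorAlgebra.map u).toLinearMap - LinearMap.id : Module.End F (ExteriorAlgebra F V)) ^ ellF a S hS))
        (wedge (F := F) (⇑b) S)
      = c • wedge (F := F) (⇑b) (Finset.univ.filter fun i : Fin k => (i : ℕ) < a) := by
  have hℓ := S.ellF_add_sum_val_fin hS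
  refine ⟨fun T hT hTS hne => ?_, ?_⟩
  · have hlt := sum_val_lt_of_termLEF hT hS hTS hne
    have h := pow_apply_mem_wedgeSpan b u hu (ellF a S hS)
      (wedge_mem_wedgeSpan b hT (n := ∑ i : Fin a, (i : ℕ) + ellF a S hS) (by omega))
    rwa [wedgeSpan_sum_val_fin_eq_bot, Submodule.mem_bot] at h
  · have h := pow_apply_mem_wedgeSpan b u hu (ellF a S hS)
      (wedge_mem_wedgeSpan b hS (n := ∑ i : Fin a, (i : ℕ) + 1 + ellF a S hS) (by omega))
    obtain ⟨c, hc⟩ := Submodule.mem_span_singleton.1 (wedgeSpan_sum_val_fin_add_one_le b a h)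
    exact ⟨c, hc.symm⟩
end

section
/- Let S_1, …, S_m be a finite multiset of subsets of [k] such that the vector η = Σ_j ι_{S_j} ∈ ℤ^k has weakly decreasing coordinates (η_1 ≥ η_2 ≥ ⋯ ≥ η_k). Define a rewriting move on multisets of subsets that removes two members S, T and inserts S ∩ T and S ∪ T. Then by a finite sequence of rewriting moves the multiset {S_1, …, S_m} can be transformed into a multiset each of whose members is an initial interval [a] = {1,…,a} for some a ≥ 0 (with [0] = ∅). -/
/-!
A move replacing two incomparable sets `S, T` by `S ∩ T, S ∪ T` keeps `|S| + |T|` but strictly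
increases `|S|² + |T|²`, and `Σ |S|²` is bounded, so repeated moves reach a chain. Moves also
keep the coordinate sums `η`. In a chain, a member `S` with `j ∈ S`, `i ∉ S` would make the
coordinate `η_j` strictly larger than `η_i` (every member containing `i` contains `S`, hence `j`),
so when `η` is weakly decreasing each member is down-closed, i.e. an initial interval.
-/

/-- A subset of `Fin k` is an initial interval `[a] = {1,…,a}` for some `a ≥ 0`
(with `[0] = ∅`), i.e. in 0-indexed terms `{i : i < a}`. -/
def IsInitialSeg {k : ℕ} (S : Finset (Fin k)) : Prop :=
  ∃ a : ℕ, ∀ i : Fin k, i ∈ S ↔ (i : ℕ) < a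

/-- A rewriting move on a multiset of subsets: remove two members `S, T` and insert
`S ∩ T` and `S ∪ T`. -/
def RewriteStep {k : ℕ} (M M' : Multiset (Finset (Fin k))) : Prop :=
  ∃ (S T : Finset (Fin k)) (M₀ : Multiset (Finset (Fin k))),
    M = S ::ₘ T ::ₘ M₀ ∧ M' = (S ∩ T) ::ₘ (S ∪ T) ::ₘ M₀

open Finset Relation

variable {k : ℕ}

theorem IsInitialSeg.of_isLowerSet {S : Finset (Fin k)} (hS : IsLowerSet (S : Set (Fin k))) :
    IsInitialSeg S := by
  refine ⟨#S, fun i => ⟨fun hi => ?_, fun hi => ?_⟩⟩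
  · have hIic : Iic i ⊆ S := fun j hj => hS (mem_Iic.mp hj) hi
    simpa using card_le_card hIic
  · by_contra hiS
    have hIio : S ⊆ Iio i := fun j hj =>
      mem_Iio.mpr (lt_of_not_ge fun hij => hiS (hS hij hj))
    simpa using (card_le_card hIio).trans_lt' hi

/-- The vector `η = Σ_j ι_{S_j}`. -/
def indicatorSum (M : Multiset (Finset (Fin k))) (i : Fin k) : ℤ :=
  (M.map fun S => if i ∈ S then (1 : ℤ) else 0).sum

theorem indicatorSum_cons (S : Finset (Fin k)) (M : Multiset (Finset (Fin k))) (i : Fin k) :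
    indicatorSum (S ::ₘ M) i = (if i ∈ S then 1 else 0) + indicatorSum M i := by
  simp [indicatorSum]

theorem RewriteStep.indicatorSum_eq {M M' : Multiset (Finset (Fin k))} (h : RewriteStep M M')
    (i : Fin k) : indicatorSum M' i = indicatorSum M i := by
  obtain ⟨S, T, M₀, rfl, rfl⟩ := h
  simp only [indicatorSum_cons, ← add_assoc, add_left_inj]
  by_cases hS : i ∈ S <;> by_cases hT : i ∈ T <;> simp [hS, hT]

theorem indicatorSum_eq_of_reflTransGen {M M' : Multiset (Finset (Fin k))}
    (h : ReflTransGen RewriteStep M M') : indicatorSum M' = indicatorSum M := by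
  induction h with
  | refl => rfl
  | tail _ hstep ih => exact (funext hstep.indicatorSum_eq).trans ih

theorem isLowerSet_of_mem_of_antitone_indicatorSum {M : Multiset (Finset (Fin k))}
    (hchain : ∀ S ∈ M, ∀ T ∈ M, S ⊆ T ∨ T ⊆ S) (hη : Antitone (indicatorSum M))
    {S : Finset (Fin k)} (hS : S ∈ M) : IsLowerSet (S : Set (Fin k)) := by
  intro j i hij hj
  by_contra hi
  obtain ⟨M₀, rfl⟩ := Multiset.exists_cons_of_mem hS
  have hle : indicatorSum M₀ i ≤ indicatorSum M₀ j := by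
    refine Multiset.sum_map_le_sum_map _ _ fun T hT => ?_
    by_cases hiT : i ∈ T
    · have hST : S ⊆ T := (hchain S (Multiset.mem_cons_self _ _) T
        (Multiset.mem_cons_of_mem hT)).resolve_right fun hTS => hi (hTS hiT)
      simp [hiT, hST hj]
    · split_ifs <;> simp
  have := hη hij
  simp only [indicatorSum_cons, if_pos (mem_coe.mp hj), if_neg (mt mem_coe.mpr hi)] at this
  linarith

def sumSqCard (M : Multiset (Finset (Fin k))) : ℕ :=
  (M.map fun S => #S ^ 2).sum

theorem sumSqCard_le (M : Multiset (Finset (Fin k))) : sumSqCard M ≤ M.card * k ^ 2 := by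
  have hbound : ∀ x ∈ M.map fun S => #S ^ 2, x ≤ k ^ 2 := by
    simp only [Multiset.mem_map, forall_exists_index, and_imp, forall_apply_eq_imp_iff₂]
    intro S _
    simpa using Nat.pow_le_pow_left (card_le_univ S) 2
  simpa [sumSqCard] using Multiset.sum_le_card_nsmul _ _ hbound

theorem card_sq_add_card_sq_lt_of_not_subset {S T : Finset (Fin k)} (hST : ¬S ⊆ T)
    (hTS : ¬T ⊆ S) : #S ^ 2 + #T ^ 2 < #(S ∩ T) ^ 2 + #(S ∪ T) ^ 2 := by
  have hS : #(S ∩ T) < #S := card_lt_card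
    ⟨inter_subset_left, fun h => hST fun x hx => (mem_inter.mp (h hx)).2⟩
  have hT : #(S ∩ T) < #T := card_lt_card
    ⟨inter_subset_right, fun h => hTS fun x hx => (mem_inter.mp (h hx)).1⟩
  have hsum := card_inter_add_card_union S T
  nlinarith

theorem exists_reflTransGen_rewriteStep_isChain (M : Multiset (Finset (Fin k))) :
    ∃ M', ReflTransGen RewriteStep M M' ∧ ∀ S ∈ M', ∀ T ∈ M', S ⊆ T ∨ T ⊆ S := by
  induction hn : M.card * k ^ 2 - sumSqCard M using Nat.strong_induction_on generalizing M with
  | _ n ih =>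
  by_cases hchain : ∀ S ∈ M, ∀ T ∈ M, S ⊆ T ∨ T ⊆ S
  · exact ⟨M, .refl, hchain⟩
  push Not at hchain
  obtain ⟨S, hS, T, hT, hST, hTS⟩ := hchain
  obtain ⟨M₁, rfl⟩ := Multiset.exists_cons_of_mem hS
  have hT₁ : T ∈ M₁ := (Multiset.mem_cons.mp hT).resolve_left (by rintro rfl; exact hST le_rfl)
  obtain ⟨M₀, rfl⟩ := Multiset.exists_cons_of_mem hT₁
  have hstep : RewriteStep (S ::ₘ T ::ₘ M₀) ((S ∩ T) ::ₘ (S ∪ T) ::ₘ M₀) := ⟨S, T, M₀, rfl, rfl⟩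
  have hlt := card_sq_add_card_sq_lt_of_not_subset hST hTS
  have hle := sumSqCard_le ((S ∩ T) ::ₘ (S ∪ T) ::ₘ M₀)
  have hdecr : ((S ∩ T) ::ₘ (S ∪ T) ::ₘ M₀).card * k ^ 2
      - sumSqCard ((S ∩ T) ::ₘ (S ∪ T) ::ₘ M₀) < n := by
    simp only [sumSqCard, Multiset.map_cons, Multiset.sum_cons, Multiset.card_cons] at hn hle ⊢
    omega
  obtain ⟨M', hM', hchain'⟩ := ih _ hdecr _ rfl
  exact ⟨M', .head hstep hM', hchain'⟩

/-- If the sum `η = Σ ι_{S_j}` of the indicator vectors of a finite multiset of subsets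
of `[k]` has weakly decreasing coordinates, then finitely many rewriting moves transform
the multiset into one consisting entirely of initial intervals. -/
theorem stmt17 {k : ℕ} (M : Multiset (Finset (Fin k)))
    (hdec : ∀ i j : Fin k, i ≤ j →
      (M.map fun S => if j ∈ S then (1 : ℤ) else 0).sum ≤
        (M.map fun S => if i ∈ S then (1 : ℤ) else 0).sum) :
    ∃ M' : Multiset (Finset (Fin k)),
      Relation.ReflTransGen RewriteStep M M' ∧ ∀ S ∈ M', IsInitialSeg S := by
  obtain ⟨M', hM', hchain⟩ := exists_reflTransGen_rewriteStep_isChain M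
  have hη : Antitone (indicatorSum M') := by
    rw [indicatorSum_eq_of_reflTransGen hM']
    exact fun i j hij => hdec i j hij
  exact ⟨M', hM', fun S hS =>
    .of_isLowerSet (isLowerSet_of_mem_of_antitone_indicatorSum hchain hη hS)⟩
end
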